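/- Let W be a Weyl group with simple roots Π and x ∈ W. Suppose J ⊆ Π ∩ xΠ. Then there exists a subset K ⊆ Π with xK = J and w_J x = x w_K, where w_J and w_K are the longest elements of the parabolic subgroups W_J and W_K respectively. -/

import Mathlib

/-!
STATEMENT 4: If `J ⊆ Π ∩ xΠ`, then there is `K ⊆ Π` with `xK = J` and `w_J x = x w_K`.
Here `Π ∩ xΠ` and the condition `xK = J` are expressed combinatorially:
`x α_j = α_i` (with `α_i, α_j` simple) corresponds to `s_i x = x s_j` together with
`ℓ(x s_j) = ℓ(x) + 1`.
-/

open scoped Classical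

section
variable {B W : Type*} [Group W] [Finite W] {M : CoxeterMatrix B}

/-- The parabolic subgroup `W_J` generated by the simple reflections `s_α`, `α ∈ J`. -/
def parabolic (cs : CoxeterSystem M W) (J : Set B) : Subgroup W :=
  Subgroup.closure (cs.simple '' J)

/-- `w` is the longest element of the parabolic subgroup `W_J`. -/
def IsLongestIn (cs : CoxeterSystem M W) (J : Set B) (w : W) : Prop :=
  w ∈ parabolic cs J ∧ ∀ v ∈ parabolic cs J, cs.length v ≤ cs.length w

/-- The set `Π ∩ xΠ` of simple roots mapped to simple roots by `x`, described
combinatorially: `Π ∩ xΠ = {β ∈ Π | ∃ α ∈ Π, s_β = x s_α x⁻¹ and ℓ(x s_α) = ℓ(x) + 1}`. -/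
def simpleCap (cs : CoxeterSystem M W) (x : W) : Set B :=
  {i | ∃ j, cs.simple i * x = x * cs.simple j ∧
    cs.length (x * cs.simple j) = cs.length x + 1}

/-- The weak right order on `W`: `v ≤_R w` iff `w = v u` with `ℓ(w) = ℓ(v) + ℓ(u)`. -/
def leR (cs : CoxeterSystem M W) (v w : W) : Prop :=
  ∃ u : W, w = v * u ∧ cs.length w = cs.length v + cs.length u

end

/-!
Let `K` be the set of `j` with `x α_j = α_i` for some `i ∈ J`. Conjugation by `x` carries the
simple reflections of `K` to those of `J`, hence `W_K` onto `W_J`, and it preserves length on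
`W_K`: as `x` has no right descent in `K` and no left descent in `J`, for `v ∈ W_K` lengths add
in both factorisations `x v = (x v x⁻¹) x`, so `ℓ(x v x⁻¹) = ℓ(v)`. Hence `x⁻¹ w_J x` is the
longest element of `W_K`.

Additivity of lengths on `x W_K` for such `x` goes through the minimal coset representative and
the strong exchange condition, which we derive from Tits' sign representation of `W` on
`W × {±1}`.
-/

namespace CoxeterSystem

variable {B W : Type*} [Group W] {M : CoxeterMatrix B} (cs : CoxeterSystem M W)

local prefix:100 "s" => cs.simple
local prefix:100 "π" => cs.wordProd
local prefix:100 "ℓ" => cs.length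

theorem simple_conj_eq_simple_iff (i : B) (t : W) : s i * t * s i = s i ↔ t = s i := by
  constructor
  · intro h
    simpa [mul_assoc] using congrArg (fun y => s i * y * s i) h
  · rintro rfl
    simp

/-- The action of `s_i` in Tits' sign representation of `W` on `W × {±1}`. -/
noncomputable def reflPerm (i : B) : Equiv.Perm (W × ℤˣ) :=
  Function.Involutive.toPerm (fun p => (s i * p.1 * s i, p.2 * if p.1 = s i then -1 else 1)) <| by
    rintro ⟨t, ε⟩
    refine Prod.ext (by simp [mul_assoc]) ?_
    by_cases ht : t = s i <;> simp [ht, cs.simple_conj_eq_simple_iff]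

theorem reflPerm_apply (i : B) (t : W) (ε : ℤˣ) :
    cs.reflPerm i (t, ε) = (s i * t * s i, ε * if t = s i then -1 else 1) :=
  rfl

theorem reflPerm_mul_pow_apply (i j : B) (n : ℕ) (t : W) (ε : ℤˣ) :
    ((cs.reflPerm i * cs.reflPerm j) ^ n) (t, ε) =
      ((s i * s j) ^ n * t * ((s i * s j) ^ n)⁻¹,
        ε * ∏ r ∈ Finset.range (2 * n), if t = s j * (s i * s j) ^ r then -1 else 1) := by
  set g := s i * s j with hg
  have conj_eq_iff : ∀ a b : W, a * t * a⁻¹ = b ↔ t = a⁻¹ * b * a := fun a b => by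
    constructor <;> rintro rfl <;> group
  have hinv : g⁻¹ * s j = s j * g := by simp [hg, mul_assoc]
  -- `s_j` inverts `g = s_i s_j`
  have hdihedral : ∀ n : ℕ, (g ^ n)⁻¹ * s j = s j * g ^ n := by
    intro n
    induction n with
    | zero => simp
    | succ n ih =>
      rw [pow_succ, mul_inv_rev, mul_assoc, ih, ← mul_assoc, hinv, mul_assoc, ← pow_succ',
        pow_succ]
  induction n with
  | zero => simp
  | succ n ih =>
    have h₁ : g ^ n * t * (g ^ n)⁻¹ = s j ↔ t = s j * g ^ (2 * n) := by
      rw [conj_eq_iff, hdihedral, mul_assoc, ← pow_add, two_mul]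
    have h₂ : s j * (g ^ n * t * (g ^ n)⁻¹) * s j = s i ↔ t = s j * g ^ (2 * n + 1) := by
      have e : (s j * g ^ n)⁻¹ * s i * (s j * g ^ n) = s j * g ^ (2 * n + 1) :=
        calc _ = ((g ^ n)⁻¹ * s j) * g * g ^ n := by simp [hg, mul_assoc]
        _ = _ := by
          rw [hdihedral, mul_assoc, mul_assoc, ← pow_succ', ← pow_add, two_mul, add_assoc]
      rw [← e, ← conj_eq_iff]
      simp [mul_assoc]
    rw [pow_succ', Equiv.Perm.mul_apply, Equiv.Perm.mul_apply, ih, reflPerm_apply, reflPerm_apply,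
      h₁, h₂]
    refine Prod.ext ?_ ?_
    · simp [pow_succ', hg, mul_assoc]
    · rw [show 2 * (n + 1) = 2 * n + 1 + 1 by ring, Finset.prod_range_succ, Finset.prod_range_succ]
      simp only [mul_assoc]

theorem isLiftable_reflPerm : M.IsLiftable cs.reflPerm := by
  intro i j
  refine Equiv.ext fun ⟨t, ε⟩ => ?_
  have hperiodic : ∀ r, s j * (s i * s j) ^ (M i j + r) = s j * (s i * s j) ^ r := by
    intro r
    rw [pow_add, cs.simple_mul_simple_pow, one_mul]
  -- the signs are indexed by two periods of `r ↦ s_j (s_i s_j)^r`, so each occurs twice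
  rw [reflPerm_mul_pow_apply, cs.simple_mul_simple_pow, two_mul, Finset.prod_range_add]
  simp only [hperiodic, Int.units_mul_self]
  simp

noncomputable def signRep : W →* Equiv.Perm (W × ℤˣ) :=
  cs.lift ⟨cs.reflPerm, cs.isLiftable_reflPerm⟩

/-- The reflection cocycle: for a reflection `t`, `reflSign w t = -1` iff `ℓ (w t) < ℓ w`. -/
noncomputable def reflSign (w t : W) : ℤˣ :=
  (cs.signRep w (t, 1)).2

theorem signRep_simple (i : B) : cs.signRep (s i) = cs.reflPerm i :=
  cs.lift_apply_simple _ i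

theorem reflSign_simple (i : B) (t : W) : cs.reflSign (s i) t = if t = s i then -1 else 1 := by
  simp [reflSign, signRep_simple, reflPerm_apply]

theorem signRep_apply (w t : W) (ε : ℤˣ) :
    cs.signRep w (t, ε) = (w * t * w⁻¹, ε * cs.reflSign w t) := by
  induction w using cs.simple_induction_left generalizing t ε with
  | one => simp [reflSign]
  | mul_simple_left w i ih =>
    have hsign : cs.reflSign (s i * w) t = cs.reflSign w t * cs.reflSign (s i) (w * t * w⁻¹) := by
      simp only [reflSign, map_mul, Equiv.Perm.mul_apply]
      rw [ih, signRep_simple, reflPerm_apply, reflPerm_apply]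
      simp
    rw [map_mul, Equiv.Perm.mul_apply, ih, signRep_simple, reflPerm_apply, hsign, reflSign_simple]
    simp [mul_assoc]

theorem reflSign_mul (u v t : W) :
    cs.reflSign (u * v) t = cs.reflSign v t * cs.reflSign u (v * t * v⁻¹) := by
  change (cs.signRep (u * v) (t, 1)).2 = _
  rw [map_mul, Equiv.Perm.mul_apply, signRep_apply, signRep_apply, one_mul]

theorem reflSign_one (t : W) : cs.reflSign 1 t = 1 := by
  simp [reflSign]

theorem reflSign_wordProd_of_notMem {ω : List B} {t : W} (h : t ∉ cs.rightInvSeq ω) :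
    cs.reflSign (π ω) t = 1 := by
  induction ω with
  | nil => exact cs.reflSign_one t
  | cons i ω ih =>
    simp only [rightInvSeq, List.mem_cons, not_or] at h
    have hne : π ω * t * (π ω)⁻¹ ≠ s i := fun he => h.1 (by rw [← he]; group)
    rw [wordProd_cons, reflSign_mul, ih h.2, reflSign_simple, if_neg hne, one_mul]

theorem reflSign_self {t : W} (ht : cs.IsReflection t) : cs.reflSign t t = -1 := by
  obtain ⟨w, i, rfl⟩ := ht
  have hcancel : cs.reflSign w⁻¹ (w * s i * w⁻¹) * cs.reflSign w (s i) = 1 := by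
    have := cs.reflSign_mul w w⁻¹ (w * s i * w⁻¹)
    rwa [mul_inv_cancel, reflSign_one, inv_inv, show w⁻¹ * (w * s i * w⁻¹) * w = s i by group,
      eq_comm] at this
  rw [reflSign_mul, reflSign_mul, show w⁻¹ * (w * s i * w⁻¹) * w⁻¹⁻¹ = s i by group,
    reflSign_simple, if_pos rfl, inv_simple, simple_mul_simple_cancel_right,
    mul_left_comm, hcancel, mul_one]

theorem length_mul_lt_of_reflSign_eq_neg_one {w t : W} (h : cs.reflSign w t = -1) :
    ℓ (w * t) < ℓ w := by
  obtain ⟨ω, hω, rfl⟩ := cs.exists_isReduced w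
  have hmem : t ∈ cs.rightInvSeq ω := by
    by_contra hnot
    rw [cs.reflSign_wordProd_of_notMem hnot] at h
    exact absurd h (by decide)
  exact (cs.isRightInversion_of_mem_rightInvSeq hω hmem).2

theorem reflSign_eq_neg_one_iff {w t : W} (ht : cs.IsReflection t) :
    cs.reflSign w t = -1 ↔ ℓ (w * t) < ℓ w := by
  refine ⟨cs.length_mul_lt_of_reflSign_eq_neg_one, fun hlt => ?_⟩
  have hw : w * t * t = w := by rw [mul_assoc, ht.mul_self, mul_one]
  have hcocycle := cs.reflSign_mul (w * t) t t
  rw [hw, cs.reflSign_self ht,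
    show t * t * t⁻¹ = t by rw [ht.mul_self, one_mul, ht.inv]] at hcocycle
  rcases Int.units_eq_one_or (cs.reflSign (w * t) t) with h | h
  · rw [hcocycle, h, mul_one]
  · have := cs.length_mul_lt_of_reflSign_eq_neg_one h
    rw [hw] at this
    omega

/-- The strong exchange condition. -/
theorem exists_eraseIdx_of_length_mul_lt {ω : List B} {t : W} (ht : cs.IsReflection t)
    (h : ℓ (π ω * t) < ℓ (π ω)) : ∃ k < ω.length, π ω * t = π (ω.eraseIdx k) := by
  have hmem : t ∈ cs.rightInvSeq ω := by
    by_contra hnot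
    have := (cs.reflSign_eq_neg_one_iff ht).mpr h
    rw [cs.reflSign_wordProd_of_notMem hnot] at this
    exact absurd this (by decide)
  obtain ⟨k, hk, rfl⟩ := List.getElem_of_mem hmem
  refine ⟨k, by simpa using hk, ?_⟩
  rw [← cs.wordProd_mul_getD_rightInvSeq, List.getD_eq_getElem]

theorem exists_isReduced_sublist (ω : List B) :
    ∃ ρ : List B, ρ.Sublist ω ∧ cs.IsReduced ρ ∧ π ρ = π ω := by
  induction ω using List.reverseRecOn with
  | nil => exact ⟨[], List.Sublist.refl _, by simp [IsReduced], rfl⟩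
  | append_singleton ω j ih =>
    obtain ⟨ρ, hsub, hred, hprod⟩ := ih
    have hprod' : π (ω ++ [j]) = π ρ * s j := by simp [wordProd_append, hprod]
    rcases cs.length_mul_simple (π ρ) j with hlen | hlen
    · refine ⟨ρ ++ [j], hsub.append (List.Sublist.refl _), ?_, by simp [hprod', wordProd_append]⟩
      rw [IsReduced] at hred ⊢
      simp [wordProd_append, hlen, hred]
    · obtain ⟨k, hk, hk'⟩ :=
        cs.exists_eraseIdx_of_length_mul_lt (ω := ρ) (cs.isReflection_simple j) (by omega)
      refine ⟨ρ.eraseIdx k,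
        List.sublist_append_of_sublist_left ((List.eraseIdx_sublist ρ k).trans hsub), ?_,
        by rw [hprod', hk']⟩
      rw [IsReduced] at hred ⊢
      rw [← hk', List.length_eraseIdx_of_lt hk]
      omega

theorem simple_mem_parabolic {K : Set B} {j : B} (hj : j ∈ K) : s j ∈ parabolic cs K :=
  Subgroup.subset_closure ⟨j, hj, rfl⟩

theorem exists_word_of_mem_parabolic {K : Set B} {v : W} (hv : v ∈ parabolic cs K) :
    ∃ ω : List B, (∀ i ∈ ω, i ∈ K) ∧ π ω = v := by
  induction hv using Subgroup.closure_induction_left with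
  | one => exact ⟨[], by simp, rfl⟩
  | mul_left _ hs _ _ ih =>
    obtain ⟨i, hi, rfl⟩ := hs
    obtain ⟨ω, hω, rfl⟩ := ih
    exact ⟨i :: ω, by simpa [hi] using hω, wordProd_cons _ _ _⟩
  | inv_mul_cancel _ hs _ _ ih =>
    obtain ⟨i, hi, rfl⟩ := hs
    obtain ⟨ω, hω, rfl⟩ := ih
    exact ⟨i :: ω, by simpa [hi] using hω, by rw [inv_simple, wordProd_cons]⟩

theorem exists_isReduced_of_mem_parabolic {K : Set B} {v : W} (hv : v ∈ parabolic cs K) :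
    ∃ ω : List B, cs.IsReduced ω ∧ (∀ i ∈ ω, i ∈ K) ∧ π ω = v := by
  obtain ⟨ω, hω, rfl⟩ := cs.exists_word_of_mem_parabolic hv
  obtain ⟨ρ, hsub, hred, hprod⟩ := cs.exists_isReduced_sublist ω
  exact ⟨ρ, hred, fun i hi => hω i (hsub.subset hi), hprod⟩

theorem exists_isRightDescent_of_mem_parabolic {K : Set B} {v : W} (hv : v ∈ parabolic cs K)
    (hv₁ : v ≠ 1) : ∃ j ∈ K, cs.IsRightDescent v j := by
  obtain ⟨ω, hred, hω, rfl⟩ := cs.exists_isReduced_of_mem_parabolic hv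
  rcases ω.eq_nil_or_concat' with rfl | ⟨ω, j, rfl⟩
  · exact absurd rfl hv₁
  refine ⟨j, hω j (by simp), ?_⟩
  have hlen := cs.length_wordProd_le ω
  rw [IsReduced] at hred
  rw [IsRightDescent, hred, wordProd_append]
  simp only [wordProd_singleton, simple_mul_simple_cancel_right, List.length_append,
    List.length_singleton]
  omega

theorem length_mul_of_forall_length_le {K : Set B} {u : W}
    (hu : ∀ c ∈ parabolic cs K, ℓ u ≤ ℓ (u * c)) {v : W} (hv : v ∈ parabolic cs K) :
    ℓ (u * v) = ℓ u + ℓ v := by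
  induction hn : ℓ v using Nat.strong_induction_on generalizing v with
  | _ n ih =>
  subst hn
  by_cases hv₁ : v = 1
  · simp [hv₁]
  obtain ⟨j, hj, hdesc⟩ := cs.exists_isRightDescent_of_mem_parabolic hv hv₁
  obtain ⟨v', rfl⟩ : ∃ v', v = v' * s j := ⟨v * s j, by simp⟩
  have hv'K : v' ∈ parabolic cs K := by
    simpa using mul_mem hv (cs.simple_mem_parabolic hj)
  have hlen : ℓ v' + 1 = ℓ (v' * s j) := by
    rcases cs.length_mul_simple v' j with h | h <;>
      simp only [IsRightDescent, simple_mul_simple_cancel_right] at hdesc <;> omega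
  have ih' := ih _ (by omega) hv'K rfl
  rcases cs.length_mul_simple (u * v') j with h | h
  · rw [← mul_assoc, h, ih']
    omega
  -- otherwise the reflection `v' s_j v'⁻¹ ∈ W_K` would shorten `u`
  exfalso
  have hsign := (cs.reflSign_eq_neg_one_iff (cs.isReflection_simple j)).mpr
    (show ℓ (u * v' * s j) < ℓ (u * v') by omega)
  have hsign' : cs.reflSign v' (s j) = 1 := by
    rcases Int.units_eq_one_or (cs.reflSign v' (s j)) with h' | h'
    · exact h'
    · have := (cs.reflSign_eq_neg_one_iff (cs.isReflection_simple j)).mp h'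
      omega
  rw [reflSign_mul, hsign', one_mul,
    cs.reflSign_eq_neg_one_iff ((cs.isReflection_simple j).conj v')] at hsign
  have hmem : v' * s j * v'⁻¹ ∈ parabolic cs K :=
    mul_mem (mul_mem hv'K (cs.simple_mem_parabolic hj)) (inv_mem hv'K)
  exact absurd (hu _ hmem) (not_le.mpr hsign)

theorem length_mul_of_forall_not_isRightDescent {K : Set B} {x : W}
    (hx : ∀ j ∈ K, ¬cs.IsRightDescent x j) {v : W} (hv : v ∈ parabolic cs K) :
    ℓ (x * v) = ℓ x + ℓ v := by
  obtain ⟨c, hc, hcmin⟩ :=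
    (measure fun c => ℓ (x * c)).wf.has_min (parabolic cs K) ⟨1, one_mem _⟩
  have hu : ∀ c' ∈ parabolic cs K, ℓ (x * c) ≤ ℓ (x * c * c') := fun c' hc' => by
    simpa [mul_assoc] using not_lt.mp (hcmin _ (mul_mem hc hc'))
  -- a right descent `j ∈ K` of `c⁻¹ ≠ 1` would be a right descent of `x = (x c) c⁻¹`
  have hc₁ : c = 1 := by
    by_contra hne
    obtain ⟨j, hj, hdesc⟩ :=
      cs.exists_isRightDescent_of_mem_parabolic (inv_mem hc) (inv_ne_one.mpr hne)
    have h₁ := cs.length_mul_of_forall_length_le hu (inv_mem hc)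
    have h₂ := cs.length_mul_of_forall_length_le hu
      (mul_mem (inv_mem hc) (cs.simple_mem_parabolic hj))
    simp only [mul_inv_cancel_right, ← mul_assoc] at h₁ h₂
    exact hx j hj (by unfold IsRightDescent at hdesc ⊢; omega)
  subst hc₁
  exact cs.length_mul_of_forall_length_le (by simpa using hu) hv

theorem length_mul_of_forall_not_isLeftDescent {J : Set B} {x : W}
    (hx : ∀ i ∈ J, ¬cs.IsLeftDescent x i) {u : W} (hu : u ∈ parabolic cs J) :
    ℓ (u * x) = ℓ u + ℓ x := by
  have hx' : ∀ i ∈ J, ¬cs.IsRightDescent x⁻¹ i := fun i hi h =>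
    hx i hi (by rwa [← inv_inv x, isLeftDescent_inv_iff])
  have := cs.length_mul_of_forall_not_isRightDescent hx' (inv_mem hu)
  rwa [← mul_inv_rev, length_inv, length_inv, length_inv, add_comm] at this

theorem length_conj_of_mem_parabolic {J K : Set B} {x v : W}
    (hxK : ∀ j ∈ K, ¬cs.IsRightDescent x j) (hxJ : ∀ i ∈ J, ¬cs.IsLeftDescent x i)
    (hv : v ∈ parabolic cs K) (hv' : x * v * x⁻¹ ∈ parabolic cs J) :
    ℓ (x * v * x⁻¹) = ℓ v := by
  have h₁ := cs.length_mul_of_forall_not_isRightDescent hxK hv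
  have h₂ := cs.length_mul_of_forall_not_isLeftDescent hxJ hv'
  rw [inv_mul_cancel_right] at h₂
  omega

theorem conj_mem_parabolic {J K : Set B} {x : W}
    (h : ∀ j ∈ K, x * s j * x⁻¹ ∈ parabolic cs J) {v : W} (hv : v ∈ parabolic cs K) :
    x * v * x⁻¹ ∈ parabolic cs J :=
  (Subgroup.closure_le ((parabolic cs J).comap (MulAut.conj x).toMonoidHom)).mpr
    (by rintro _ ⟨j, hj, rfl⟩; exact h j hj) hv

end CoxeterSystem

theorem IsLongestIn.conj {B W : Type*} [Group W] {M : CoxeterMatrix B} {cs : CoxeterSystem M W}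
    {J K : Set B} {x w : W} (hw : IsLongestIn cs J w)
    (hKJ : ∀ v ∈ parabolic cs K, x * v * x⁻¹ ∈ parabolic cs J)
    (hJK : ∀ u ∈ parabolic cs J, x⁻¹ * u * x ∈ parabolic cs K)
    (hlen : ∀ v ∈ parabolic cs K, cs.length (x * v * x⁻¹) = cs.length v) :
    IsLongestIn cs K (x⁻¹ * w * x) := by
  refine ⟨hJK w hw.1, fun v hv => ?_⟩
  calc cs.length v = cs.length (x * v * x⁻¹) := (hlen v hv).symm
    _ ≤ cs.length w := hw.2 _ (hKJ v hv)
    _ = cs.length (x⁻¹ * w * x) := by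
      simpa [mul_assoc] using hlen _ (hJK w hw.1)

theorem exists_K_longest_conjugate_general
    {B W : Type*} [Group W] {M : CoxeterMatrix B}
    (cs : CoxeterSystem M W) (x : W) (J : Set B)
    (hJ : J ⊆ simpleCap cs x)
    (wJ : W) (hwJ : IsLongestIn cs J wJ) :
    ∃ (K : Set B) (wK : W), IsLongestIn cs K wK ∧
      (∀ j ∈ K, ∃ i ∈ J, cs.simple i * x = x * cs.simple j ∧
        cs.length (x * cs.simple j) = cs.length x + 1) ∧
      (∀ i ∈ J, ∃ j ∈ K, cs.simple i * x = x * cs.simple j ∧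
        cs.length (x * cs.simple j) = cs.length x + 1) ∧
      wJ * x = x * wK := by
  set K : Set B := {j | ∃ i ∈ J, cs.simple i * x = x * cs.simple j ∧
    cs.length (x * cs.simple j) = cs.length x + 1}
  have hJK : ∀ i ∈ J, ∃ j ∈ K, cs.simple i * x = x * cs.simple j ∧
      cs.length (x * cs.simple j) = cs.length x + 1 := fun i hi =>
    let ⟨j, hj⟩ := hJ hi
    ⟨j, ⟨i, hi, hj⟩, hj⟩
  have hconjK : ∀ v ∈ parabolic cs K, x * v * x⁻¹ ∈ parabolic cs J :=
    fun v => cs.conj_mem_parabolic (fun j hj => by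
      obtain ⟨i, hi, hij, _⟩ := hj
      rw [← hij, mul_inv_cancel_right]
      exact cs.simple_mem_parabolic hi)
  have hconjJ : ∀ u ∈ parabolic cs J, x⁻¹ * u * x ∈ parabolic cs K := fun u hu => by
    simpa using cs.conj_mem_parabolic (x := x⁻¹) (fun i hi => by
      obtain ⟨j, hj, hij, _⟩ := hJK i hi
      rw [inv_inv, mul_assoc, hij, inv_mul_cancel_left]
      exact cs.simple_mem_parabolic hj) hu
  have hxK : ∀ j ∈ K, ¬cs.IsRightDescent x j := by
    rintro j ⟨_, _, _, hlen⟩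
    simp [CoxeterSystem.IsRightDescent, hlen]
  have hxJ : ∀ i ∈ J, ¬cs.IsLeftDescent x i := fun i hi => by
    obtain ⟨j, _, hij, hlen⟩ := hJK i hi
    simp [CoxeterSystem.IsLeftDescent, hij, hlen]
  have hlen : ∀ v ∈ parabolic cs K, cs.length (x * v * x⁻¹) = cs.length v := fun v hv =>
    cs.length_conj_of_mem_parabolic hxK hxJ hv (hconjK v hv)
  exact ⟨K, x⁻¹ * wJ * x, hwJ.conj hconjK hconjJ hlen, fun j hj => hj, hJK, by group⟩

theorem exists_K_longest_conjugate
    {B W : Type*} [Group W] [Finite W] {M : CoxeterMatrix B}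
    (cs : CoxeterSystem M W) (x : W) (J : Set B)
    (hJ : J ⊆ simpleCap cs x)
    (wJ : W) (hwJ : IsLongestIn cs J wJ) :
    ∃ (K : Set B) (wK : W), IsLongestIn cs K wK ∧
      (∀ j ∈ K, ∃ i ∈ J, cs.simple i * x = x * cs.simple j ∧
        cs.length (x * cs.simple j) = cs.length x + 1) ∧
      (∀ i ∈ J, ∃ j ∈ K, cs.simple i * x = x * cs.simple j ∧
        cs.length (x * cs.simple j) = cs.length x + 1) ∧
      wJ * x = x * wK :=
  exists_K_longest_conjugate_general cs x J hJ wJ hwJ
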